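/- For every natural number n and complex number a with (2a+1)_k ≠ 0 for 0 ≤ k ≤ 2n+1 and 2a+1 ≠ 0, ∑_{k=0}^{2n+1} (-2n-1)_k (a)_k 2^k / ((2a+1)_k k!) = (3/2)_n / ((2a+1) (a+3/2)_n). -/

import Mathlib

open Finset

/-- The Pochhammer symbol (rising factorial) `(x)_k = x (x+1) ⋯ (x+k-1)`. -/
noncomputable def poch (x : ℂ) (k : ℕ) : ℂ := (ascPochhammer ℂ k).eval x

/-!
Write `S(M) = ₂F₁(-M, a; 2a+1; 2)`. Zeilberger's algorithm gives the three-term recurrence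
`(2a + m + 2) S(m+2) = S(m+1) + (m+1) S(m)`, proved by telescoping against an explicit
certificate. Induction over pairs `(S(2n), S(2n+1))` then yields the closed forms
`S(2n) = (1/2)_n / (a+1/2)_n` and `S(2n+1) = (1/2)_{n+1} / (a+1/2)_{n+1}`, and the latter is the
theorem since `(1/2)_{n+1} = (1/2) (3/2)_n` and `(a+1/2)_{n+1} = (a+1/2) (a+3/2)_n`.
-/

@[simp]
lemma poch_zero (x : ℂ) : poch x 0 = 1 := by
  simp [poch]

lemma poch_succ (x : ℂ) (k : ℕ) : poch x (k + 1) = poch x k * (x + k) :=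
  ascPochhammer_succ_eval k x

lemma poch_succ_left (x : ℂ) (k : ℕ) : poch x (k + 1) = x * poch (x + 1) k := by
  simp [poch, ascPochhammer_succ_left, Polynomial.eval_comp]

lemma poch_neg_natCast_of_lt {M k : ℕ} (h : M < k) : poch (-(M : ℂ)) k = 0 :=
  ascPochhammer_eval_neg_coe_nat_of_lt h

lemma poch_ne_zero_iff {x : ℂ} {k : ℕ} : poch x k ≠ 0 ↔ ∀ i < k, x + i ≠ 0 := by
  simp only [poch, ne_eq, ascPochhammer_eval_eq_zero_iff, not_exists, not_and]
  refine forall₂_congr fun i _ => not_congr ⟨fun h => ?_, fun h => ?_⟩ <;>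
    linear_combination h

lemma poch_ne_zero_of_poch_two_mul_ne_zero {x : ℂ} {n : ℕ}
    (h : poch (2 * x) (2 * n + 1) ≠ 0) : poch x (n + 1) ≠ 0 := by
  rw [poch_ne_zero_iff] at h ⊢
  intro i hi hx
  exact h (2 * i) (by omega) (by push_cast; linear_combination 2 * hx)

lemma poch_recurrence_identity (x c : ℂ) (k : ℕ) :
    (c - x + 1) * poch (x - 2) (k + 1) - poch (x - 1) (k + 1) + (x - 1) * poch x (k + 1)
      = (c + 2 * k + 1) * poch (x - 1) (k + 1) - (c + k) * (k + 1) * poch (x - 1) k := by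
  have hshift : (x - 1) * poch x k = poch (x - 1) k * (x - 1 + k) := by
    rw [← poch_succ, poch_succ_left, sub_add_cancel]
  rw [poch_succ_left (x - 2), show x - 2 + 1 = x - 1 by ring, poch_succ (x - 1), poch_succ x]
  linear_combination (x + k) * hshift

noncomputable def twoF1Term (a : ℂ) (M k : ℕ) : ℂ :=
  poch (-(M : ℂ)) k * poch a k * 2 ^ k / (poch (2 * a + 1) k * k.factorial)

/-- `₂F₁(-M, a; 2a+1; 2)`, a terminating series since `(-M)_k = 0` for `k > M`. -/
noncomputable def twoF1 (a : ℂ) (M : ℕ) : ℂ := ∑ k ∈ range (M + 1), twoF1Term a M k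

/-- Zeilberger's certificate for the recurrence `twoF1_recurrence`. -/
noncomputable def twoF1Cert (a : ℂ) (m k : ℕ) : ℂ :=
  poch (-(m : ℂ) - 1) k * poch a (k + 1) * 2 ^ (k + 1) / (poch (2 * a + 1) k * k.factorial)

section

variable (a : ℂ)

@[simp]
lemma twoF1Term_zero (M : ℕ) : twoF1Term a M 0 = 1 := by
  simp [twoF1Term]

lemma twoF1Term_eq_zero_of_lt {M k : ℕ} (h : M < k) : twoF1Term a M k = 0 := by
  simp [twoF1Term, poch_neg_natCast_of_lt h]

@[simp]
lemma twoF1_zero : twoF1 a 0 = 1 := by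
  simp [twoF1]

lemma twoF1_one (ha : 2 * a + 1 ≠ 0) : (2 * a + 1) * twoF1 a 1 = 1 := by
  simp only [twoF1, sum_range_succ, range_one, sum_singleton, twoF1Term, poch_succ, poch_zero]
  norm_num
  rw [mul_add, mul_div_cancel₀ _ ha]
  ring

lemma twoF1_eq_one_add_sum {M N : ℕ} (h : M ≤ N + 1) :
    twoF1 a M = 1 + ∑ k ∈ range (N + 1), twoF1Term a M (k + 1) := by
  have hsub : range (M + 1) ⊆ range (N + 2) := range_subset_range.2 (by omega)
  rw [twoF1, sum_subset hsub fun k hk hkM => twoF1Term_eq_zero_of_lt a (by simp_all),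
    sum_range_succ', twoF1Term_zero, add_comm]

lemma twoF1Term_recurrence (m k : ℕ) (hk : poch (2 * a + 1) (k + 1) ≠ 0) :
    (2 * a + m + 2) * twoF1Term a (m + 2) (k + 1) - twoF1Term a (m + 1) (k + 1)
        - (m + 1) * twoF1Term a m (k + 1)
      = twoF1Cert a m (k + 1) - twoF1Cert a m k := by
  set B := poch a (k + 1) * 2 ^ (k + 1) / (poch (2 * a + 1) (k + 1) * (k + 1).factorial) with hB
  have hterm (M : ℕ) : twoF1Term a M (k + 1) = poch (-(M : ℂ)) (k + 1) * B := by
    rw [twoF1Term, hB]; ring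
  have hcert_succ :
      twoF1Cert a m (k + 1) = (2 * a + 1 + 2 * k + 1) * poch (-(m : ℂ) - 1) (k + 1) * B := by
    rw [twoF1Cert, hB, poch_succ a (k + 1), pow_succ]; push_cast; ring
  have hcert : twoF1Cert a m k = (2 * a + 1 + k) * (k + 1) * poch (-(m : ℂ) - 1) k * B := by
    have hk' : 2 * a + 1 + k ≠ 0 := poch_ne_zero_iff.1 hk k (by omega)
    rw [poch_succ] at hk
    rw [twoF1Cert, hB, poch_succ (2 * a + 1) k, Nat.factorial_succ]
    push_cast
    field_simp
  rw [hterm, hterm, hterm, hcert_succ, hcert,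
    show -((m + 2 : ℕ) : ℂ) = -(m : ℂ) - 2 by push_cast; ring,
    show -((m + 1 : ℕ) : ℂ) = -(m : ℂ) - 1 by push_cast; ring]
  linear_combination B * poch_recurrence_identity (-(m : ℂ)) (2 * a + 1) k

lemma twoF1_recurrence (m : ℕ) (h : ∀ k ≤ m + 2, poch (2 * a + 1) k ≠ 0) :
    (2 * a + m + 2) * twoF1 a (m + 2) = twoF1 a (m + 1) + (m + 1) * twoF1 a m := by
  have htel := sum_range_sub (twoF1Cert a m) (m + 2)
  rw [← sum_congr rfl fun k hk => twoF1Term_recurrence a m k (h (k + 1) (by simp at hk; omega)),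
    sum_sub_distrib, sum_sub_distrib, ← mul_sum, ← mul_sum] at htel
  have hcert_top : twoF1Cert a m (m + 2) = 0 := by
    rw [twoF1Cert, show -(m : ℂ) - 1 = -((m + 1 : ℕ) : ℂ) by push_cast; ring,
      poch_neg_natCast_of_lt (by omega), zero_mul, zero_mul, zero_div]
  have hcert_zero : twoF1Cert a m 0 = 2 * a := by
    simp [twoF1Cert, poch_succ, mul_comm]
  rw [twoF1_eq_one_add_sum a (M := m + 2) (N := m + 1) le_rfl,
    twoF1_eq_one_add_sum a (M := m + 1) (N := m + 1) (by omega),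
    twoF1_eq_one_add_sum a (M := m) (N := m + 1) (by omega)]
  linear_combination htel + hcert_top - hcert_zero

lemma twoF1_even_odd (n : ℕ) (h : ∀ k ≤ 2 * n + 1, poch (2 * a + 1) k ≠ 0) :
    poch (a + 1 / 2) n * twoF1 a (2 * n) = poch (1 / 2) n ∧
      poch (a + 1 / 2) (n + 1) * twoF1 a (2 * n + 1) = poch (1 / 2) (n + 1) := by
  induction n with
  | zero =>
    have ha : 2 * a + 1 ≠ 0 := by simpa [poch_succ] using h 1 le_rfl
    refine ⟨by simp, ?_⟩
    simp only [poch_succ, poch_zero]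
    push_cast
    linear_combination twoF1_one a ha / 2
  | succ n ih =>
    obtain ⟨heven, hodd⟩ := ih fun k hk => h k (by omega)
    have hrec_even := twoF1_recurrence a (2 * n) fun k hk => h k (by omega)
    have hrec_odd := twoF1_recurrence a (2 * n + 1) fun k hk => h k (by omega)
    have hfactor : 2 * a + 1 + ((2 * n + 1 : ℕ) : ℂ) ≠ 0 :=
      poch_ne_zero_iff.1 (h (2 * n + 2) (by omega)) (2 * n + 1) (by omega)
    have heven' : poch (a + 1 / 2) (n + 1) * twoF1 a (2 * n + 2) = poch (1 / 2) (n + 1) := by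
      apply mul_left_cancel₀ hfactor
      simp only [poch_succ _ n] at hodd ⊢
      push_cast at hrec_even hodd ⊢
      linear_combination poch (a + 1 / 2) n * (a + 1 / 2 + n) * hrec_even + hodd
        + (2 * n + 1) * (a + 1 / 2 + n) * heven
    refine ⟨heven', ?_⟩
    rw [poch_succ _ (n + 1), poch_succ _ (n + 1)]
    push_cast at hrec_odd ⊢
    linear_combination poch (a + 1 / 2) (n + 1) / 2 * hrec_odd + heven' / 2 + (n + 1) * hodd

end

theorem twoF1_neg2np1_a_twoAp1_general (n : ℕ) (a : ℂ)
    (h : ∀ k ≤ 2 * n + 1, poch (2 * a + 1) k ≠ 0) :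
    ∑ k ∈ range (2 * n + 2),
        poch (-(2 * n : ℂ) - 1) k * poch a k * 2 ^ k / (poch (2 * a + 1) k * (k.factorial : ℂ))
      = poch (3 / 2) n / ((2 * a + 1) * poch (a + 3 / 2) n) := by
  have hsum : ∑ k ∈ range (2 * n + 2),
      poch (-(2 * n : ℂ) - 1) k * poch a k * 2 ^ k / (poch (2 * a + 1) k * (k.factorial : ℂ))
        = twoF1 a (2 * n + 1) := by
    rw [twoF1, show -(2 * n : ℂ) - 1 = -((2 * n + 1 : ℕ) : ℂ) by push_cast; ring]
    rfl
  have hc : poch (a + 1 / 2) (n + 1) ≠ 0 := by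
    refine poch_ne_zero_of_poch_two_mul_ne_zero ?_
    rw [mul_add, mul_one_div_cancel two_ne_zero]
    exact h _ le_rfl
  have hS : twoF1 a (2 * n + 1) = poch (1 / 2) (n + 1) / poch (a + 1 / 2) (n + 1) := by
    rw [eq_div_iff hc, mul_comm]
    exact (twoF1_even_odd a n h).2
  rw [hsum, hS, poch_succ_left, poch_succ_left,
    show a + 1 / 2 + 1 = a + 3 / 2 by ring, show (1 / 2 + 1 : ℂ) = 3 / 2 by norm_num,
    show 2 * a + 1 = 2 * (a + 1 / 2) by ring]
  simp only [div_eq_mul_inv, mul_inv]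
  ring

theorem twoF1_neg2np1_a_twoAp1 (n : ℕ) (a : ℂ)
    (h : ∀ k ≤ 2 * n + 1, poch (2 * a + 1) k ≠ 0) (ha : 2 * a + 1 ≠ 0) :
    ∑ k ∈ range (2 * n + 2),
        poch (-(2 * n : ℂ) - 1) k * poch a k * 2 ^ k / (poch (2 * a + 1) k * (k.factorial : ℂ))
      = poch (3 / 2) n / ((2 * a + 1) * poch (a + 3 / 2) n) :=
  twoF1_neg2np1_a_twoAp1_general n a h
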